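/- Let X be a Banach function lattice on a σ-finite measure space, let 1 ≤ p < q < ∞ and 1/r = 1/p − 1/q. Then for every finite sequence x_1, …, x_n ∈ X: sup_{x* ∈ B_{X*}} ( ∑_{k=1}^n |⟨x_k, x*⟩|^q )^{1/q} ≤ sup_{(β_k) ∈ B_r^n} ‖ ( ∑_{k=1}^n |β_k x_k|^p )^{1/p} ‖_X ≤ ‖ ( ∑_{k=1}^n |x_k|^q )^{1/q} ‖_X. -/

import Mathlib

open MeasureTheory Filter

noncomputable section

section Preamble

variable {Ω : Type} [MeasurableSpace Ω] {μ : Measure Ω}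

/-- The a.e.-class of `ω ↦ |f ω| ^ e` (real power). -/
def rpowAbs (e : ℝ) (f : Ω →ₘ[μ] ℝ) : Ω →ₘ[μ] ℝ :=
  AEEqFun.mk (fun ω => |f ω| ^ e)
    (((measurable_abs.comp_aemeasurable f.aestronglyMeasurable.aemeasurable).pow
        aemeasurable_const).aestronglyMeasurable)

/-- The a.e.-class of `ω ↦ (∑ k, |x k ω| ^ p) ^ (1/p)`. -/
def pSum (p : ℝ) {n : ℕ} (x : Fin n → (Ω →ₘ[μ] ℝ)) : Ω →ₘ[μ] ℝ :=
  AEEqFun.mk (fun ω => (∑ k, |x k ω| ^ p) ^ p⁻¹)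
    (((Finset.aemeasurable_fun_sum Finset.univ fun k _ =>
        ((measurable_abs.comp_aemeasurable (x k).aestronglyMeasurable.aemeasurable).pow
          aemeasurable_const)).pow
      aemeasurable_const).aestronglyMeasurable)

/-- A Banach function lattice on a measure space `(Ω, μ)`: an order ideal of `L⁰(μ)`
equipped with a complete lattice norm. -/
structure BFL (Ω : Type) [MeasurableSpace Ω] (μ : Measure Ω) where
  mem : (Ω →ₘ[μ] ℝ) → Prop
  nrm : (Ω →ₘ[μ] ℝ) → ℝ
  zero_mem : mem 0
  add_mem : ∀ f g, mem f → mem g → mem (f + g)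
  smul_mem : ∀ (c : ℝ) f, mem f → mem (c • f)
  ideal : ∀ f g, mem g → |f| ≤ |g| → mem f
  nrm_nonneg : ∀ f, 0 ≤ nrm f
  nrm_eq_zero : ∀ f, mem f → nrm f = 0 → f = 0
  nrm_triangle : ∀ f g, mem f → mem g → nrm (f + g) ≤ nrm f + nrm g
  nrm_smul : ∀ (c : ℝ) f, mem f → nrm (c • f) = |c| * nrm f
  nrm_mono : ∀ f g, mem g → |f| ≤ |g| → nrm f ≤ nrm g
  complete : ∀ u : ℕ → (Ω →ₘ[μ] ℝ), (∀ n, mem (u n)) →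
    (∀ ε : ℝ, 0 < ε → ∃ N, ∀ m ≥ N, ∀ k ≥ N, nrm (u m - u k) < ε) →
    ∃ f, mem f ∧ Tendsto (fun n => nrm (u n - f)) atTop (nhds 0)

/-- `p`-convexity with constant `C`. -/
def BFL.pConvex (X : BFL Ω μ) (p C : ℝ) : Prop :=
  ∀ (n : ℕ) (x : Fin n → (Ω →ₘ[μ] ℝ)), (∀ k, X.mem (x k)) →
    X.mem (pSum p x) ∧ X.nrm (pSum p x) ≤ C * (∑ k, X.nrm (x k) ^ p) ^ p⁻¹

/-- `p`-concavity with constant `C`. -/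
def BFL.pConcave (X : BFL Ω μ) (p C : ℝ) : Prop :=
  ∀ (n : ℕ) (x : Fin n → (Ω →ₘ[μ] ℝ)), (∀ k, X.mem (x k)) →
    (∑ k, X.nrm (x k) ^ p) ^ p⁻¹ ≤ C * X.nrm (pSum p x)

/-- Order continuity of a function norm: decreasing sequences with infimum `0`
have norms tending to `0`. -/
def OrderContOn (mem : (Ω →ₘ[μ] ℝ) → Prop) (nrm : (Ω →ₘ[μ] ℝ) → ℝ) : Prop :=
  ∀ f : ℕ → (Ω →ₘ[μ] ℝ), (∀ n, mem (f n)) → (∀ n, f (n + 1) ≤ f n) → (∀ n, 0 ≤ f n) →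
    (∀ g, (∀ n, g ≤ f n) → g ≤ 0) → Tendsto (fun n => nrm (f n)) atTop (nhds 0)

/-- Order continuity of a Banach function lattice. -/
def BFL.OrderCont (X : BFL Ω μ) : Prop := OrderContOn X.mem X.nrm

/-- The Fatou property. -/
def BFL.Fatou (X : BFL Ω μ) : Prop :=
  ∀ (f : ℕ → (Ω →ₘ[μ] ℝ)) (g : Ω →ₘ[μ] ℝ), (∀ n, X.mem (f n)) → (∀ n, 0 ≤ f n) →
    Monotone f → (∀ n, f n ≤ g) → (∀ h, (∀ n, f n ≤ h) → g ≤ h) →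
    BddAbove (Set.range fun n => X.nrm (f n)) →
    X.mem g ∧ Tendsto (fun n => X.nrm (f n)) atTop (nhds (X.nrm g))

/-- The closed unit ball `B_r^n` of `ℓ_r^n` where `1/r = 1/p - 1/q` (`r = ∞` when `p = q`). -/
def strongBall (p q : ℝ) (n : ℕ) : Set (Fin n → ℝ) :=
  {β | if p = q then ∀ k, |β k| ≤ 1 else ∑ k, |β k| ^ (1 / p - 1 / q)⁻¹ ≤ 1}

/-- `sup_{β ∈ B_r^n} ‖(∑_k |β_k x_k|^p)^{1/p}‖`, where `1/r = 1/p - 1/q`. -/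
def strongSup (nrm : (Ω →ₘ[μ] ℝ) → ℝ) (p q : ℝ) {n : ℕ} (x : Fin n → (Ω →ₘ[μ] ℝ)) : ℝ :=
  ⨆ β : strongBall p q n, nrm (pSum p fun k => β.1 k • x k)

/-- Membership in the `p`-concavification: `f ∈ X_p ↔ |f|^{1/p} ∈ X`. -/
def cMem (mem : (Ω →ₘ[μ] ℝ) → Prop) (p : ℝ) (f : Ω →ₘ[μ] ℝ) : Prop := mem (rpowAbs p⁻¹ f)

/-- The norm of the `p`-concavification: `‖f‖_{X_p} = ‖|f|^{1/p}‖_X ^ p`. -/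
def cNrm (nrm : (Ω →ₘ[μ] ℝ) → ℝ) (p : ℝ) (f : Ω →ₘ[μ] ℝ) : ℝ := nrm (rpowAbs p⁻¹ f) ^ p

/-- The positive part of the closed dual unit ball of a function norm: positive functionals
of norm at most one, as bare functions on `L⁰`. -/
def dualBallPos (mem : (Ω →ₘ[μ] ℝ) → Prop) (nrm : (Ω →ₘ[μ] ℝ) → ℝ) :
    Set ((Ω →ₘ[μ] ℝ) → ℝ) :=
  {φ | (∀ f g, mem f → mem g → φ (f + g) = φ f + φ g) ∧
       (∀ (c : ℝ) f, mem f → φ (c • f) = c * φ f) ∧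
       (∀ f, mem f → 0 ≤ f → 0 ≤ φ f) ∧
       (∀ f, mem f → |φ f| ≤ nrm f)}

/-- The closed dual unit ball of a function norm. -/
def dualBall (mem : (Ω →ₘ[μ] ℝ) → Prop) (nrm : (Ω →ₘ[μ] ℝ) → ℝ) :
    Set ((Ω →ₘ[μ] ℝ) → ℝ) :=
  {φ | (∀ f g, mem f → mem g → φ (f + g) = φ f + φ g) ∧
       (∀ (c : ℝ) f, mem f → φ (c • f) = c * φ f) ∧
       (∀ f, mem f → |φ f| ≤ nrm f)}

/-- The positive part of the dual unit ball, as a type carrying the weak* (pointwise)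
topology and its Borel σ-algebra. -/
def DualPos (mem : (Ω →ₘ[μ] ℝ) → Prop) (nrm : (Ω →ₘ[μ] ℝ) → ℝ) : Type _ :=
  ↥(dualBallPos mem nrm)

instance {mem : (Ω →ₘ[μ] ℝ) → Prop} {nrm : (Ω →ₘ[μ] ℝ) → ℝ} :
    TopologicalSpace (DualPos (μ := μ) mem nrm) :=
  inferInstanceAs (TopologicalSpace ↥(dualBallPos mem nrm))

instance {mem : (Ω →ₘ[μ] ℝ) → Prop} {nrm : (Ω →ₘ[μ] ℝ) → ℝ} :
    MeasurableSpace (DualPos (μ := μ) mem nrm) := borel _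

instance {mem : (Ω →ₘ[μ] ℝ) → Prop} {nrm : (Ω →ₘ[μ] ℝ) → ℝ} :
    BorelSpace (DualPos (μ := μ) mem nrm) := ⟨rfl⟩

/-- Evaluation of a functional in the dual ball. -/
def DualPos.app {mem : (Ω →ₘ[μ] ℝ) → Prop} {nrm : (Ω →ₘ[μ] ℝ) → ℝ}
    (φ : DualPos (μ := μ) mem nrm) (f : Ω →ₘ[μ] ℝ) : ℝ :=
  Subtype.val φ f

/-- The seminorm `‖f‖_{p,q,ν} = (∫ ⟨|f|^p, φ⟩^{q/p} dν(φ))^{1/q}`. -/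
def pqNrm {mem : (Ω →ₘ[μ] ℝ) → Prop} {nrm : (Ω →ₘ[μ] ℝ) → ℝ} (p q : ℝ)
    (ν : Measure (DualPos (μ := μ) mem nrm)) (f : Ω →ₘ[μ] ℝ) : ℝ :=
  (∫ φ, (DualPos.app φ (rpowAbs p f)) ^ (q / p) ∂ν) ^ q⁻¹

/-- Membership in the Köthe dual of a function space. -/
def kMem (mem : (Ω →ₘ[μ] ℝ) → Prop) (h : Ω →ₘ[μ] ℝ) : Prop :=
  ∀ f, mem f → ∫⁻ ω, ENNReal.ofReal |f ω * h ω| ∂μ < ⊤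

/-- The Köthe dual norm. -/
def kNrm (mem : (Ω →ₘ[μ] ℝ) → Prop) (nrm : (Ω →ₘ[μ] ℝ) → ℝ) (h : Ω →ₘ[μ] ℝ) : ℝ :=
  ⨆ f : {f : Ω →ₘ[μ] ℝ // mem f ∧ nrm f ≤ 1}, ∫ ω, |f.1 ω * h ω| ∂μ

/-- The positive part of the closed unit ball of the Köthe dual. -/
def kothePosBall (mem : (Ω →ₘ[μ] ℝ) → Prop) (nrm : (Ω →ₘ[μ] ℝ) → ℝ) :
    Set (Ω →ₘ[μ] ℝ) :=
  {h | 0 ≤ h ∧ ∀ f, mem f → ∫⁻ ω, ENNReal.ofReal |f ω * h ω| ∂μ ≤ ENNReal.ofReal (nrm f)}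

/-- The positive part of the Köthe-dual unit ball, as a type carrying the topology
`σ(X', X)` of pointwise convergence of the pairings, and its Borel σ-algebra. -/
def KBallPos (mem : (Ω →ₘ[μ] ℝ) → Prop) (nrm : (Ω →ₘ[μ] ℝ) → ℝ) : Type _ :=
  ↥(kothePosBall (μ := μ) mem nrm)

/-- The underlying function of an element of the Köthe-dual ball. -/
def KBallPos.fn {mem : (Ω →ₘ[μ] ℝ) → Prop} {nrm : (Ω →ₘ[μ] ℝ) → ℝ}
    (h : KBallPos (μ := μ) mem nrm) : Ω →ₘ[μ] ℝ :=
  Subtype.val h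

instance {mem : (Ω →ₘ[μ] ℝ) → Prop} {nrm : (Ω →ₘ[μ] ℝ) → ℝ} :
    TopologicalSpace (KBallPos (μ := μ) mem nrm) :=
  TopologicalSpace.induced
    (fun h => fun f : (Ω →ₘ[μ] ℝ) => ∫ ω, f ω * (KBallPos.fn h) ω ∂μ) Pi.topologicalSpace

instance {mem : (Ω →ₘ[μ] ℝ) → Prop} {nrm : (Ω →ₘ[μ] ℝ) → ℝ} :
    MeasurableSpace (KBallPos (μ := μ) mem nrm) := borel _

/-- Membership in the space `S^q_{X_p}(ξ)`. -/
def sMem {mem : (Ω →ₘ[μ] ℝ) → Prop} {nrm : (Ω →ₘ[μ] ℝ) → ℝ} (p q : ℝ)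
    (ξ : Measure (KBallPos (μ := μ) mem nrm)) (f : Ω →ₘ[μ] ℝ) : Prop :=
  (∫⁻ h, (∫⁻ ω, ENNReal.ofReal (|f ω| ^ p * (KBallPos.fn h) ω) ∂μ) ^ (q / p) ∂ξ) < ⊤

/-- The norm of the space `S^q_{X_p}(ξ)`:
`‖f‖ = (∫ (∫ |f|^p h dμ)^{q/p} dξ(h))^{1/q}`. -/
def sNrm {mem : (Ω →ₘ[μ] ℝ) → Prop} {nrm : (Ω →ₘ[μ] ℝ) → ℝ} (p q : ℝ)
    (ξ : Measure (KBallPos (μ := μ) mem nrm)) (f : Ω →ₘ[μ] ℝ) : ℝ :=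
  ((∫⁻ h, (∫⁻ ω, ENNReal.ofReal (|f ω| ^ p * (KBallPos.fn h) ω) ∂μ) ^ (q / p) ∂ξ) ^ q⁻¹).toReal

end Preamble

section Operators

/-- A bounded linear operator between Banach function lattices, as a map of `L⁰` spaces. -/
def IsBddOp {Ω₁ Ω₂ : Type} [MeasurableSpace Ω₁] [MeasurableSpace Ω₂]
    {μ₁ : Measure Ω₁} {μ₂ : Measure Ω₂} (X : BFL Ω₁ μ₁) (Y : BFL Ω₂ μ₂)
    (T : (Ω₁ →ₘ[μ₁] ℝ) → (Ω₂ →ₘ[μ₂] ℝ)) : Prop :=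
  (∀ f, X.mem f → Y.mem (T f)) ∧
  (∀ f g, X.mem f → X.mem g → T (f + g) = T f + T g) ∧
  (∀ (c : ℝ) f, X.mem f → T (c • f) = c • T f) ∧
  ∃ K, ∀ f, X.mem f → Y.nrm (T f) ≤ K * X.nrm f

/-- A bounded linear operator from a Banach function lattice into a normed space. -/
def IsBddOpE {Ω : Type} [MeasurableSpace Ω] {μ : Measure Ω} (X : BFL Ω μ) {E : Type}
    [NormedAddCommGroup E] [NormedSpace ℝ E] (T : (Ω →ₘ[μ] ℝ) → E) : Prop :=
  (∀ f g, X.mem f → X.mem g → T (f + g) = T f + T g) ∧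
  (∀ (c : ℝ) f, X.mem f → T (c • f) = c • T f) ∧
  ∃ K, ∀ f, X.mem f → ‖T f‖ ≤ K * X.nrm f

/-- `T : X → Y` is `(p₁,p₂)`-strongly `(q₁,q₂)`-concave with constant `C`:
`|∑ₖ ⟨T xₖ, yₖ'⟩| ≤ C · sup_{α ∈ B_{r₁}} ‖(∑ |αₖ xₖ|^{p₁})^{1/p₁}‖_X ·
sup_{β ∈ B_{r₂}} ‖(∑ |βₖ yₖ'|^{p₂})^{1/p₂}‖_{Y'}` for all finite sequences in `X` and `Y'`. -/
def StrongPair {Ω₁ Ω₂ : Type} [MeasurableSpace Ω₁] [MeasurableSpace Ω₂]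
    {μ₁ : Measure Ω₁} {μ₂ : Measure Ω₂} (X : BFL Ω₁ μ₁) (Y : BFL Ω₂ μ₂)
    (p₁ q₁ p₂ q₂ : ℝ) (T : (Ω₁ →ₘ[μ₁] ℝ) → (Ω₂ →ₘ[μ₂] ℝ)) (C : ℝ) : Prop :=
  ∀ (n : ℕ) (x : Fin n → (Ω₁ →ₘ[μ₁] ℝ)) (y : Fin n → (Ω₂ →ₘ[μ₂] ℝ)),
    (∀ k, X.mem (x k)) → (∀ k, kMem Y.mem (y k)) →
    |∑ k, ∫ ω, (T (x k)) ω * (y k) ω ∂μ₂| ≤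
      C * (strongSup X.nrm p₁ q₁ x * strongSup (kNrm Y.mem Y.nrm) p₂ q₂ y)

/-- A bounded `m`-linear operator on a product of Banach function lattices. -/
def MultilinearBdd {m : ℕ} {Ω : Fin m → Type} [∀ j, MeasurableSpace (Ω j)]
    {μ : ∀ j, Measure (Ω j)} (X : ∀ j, BFL (Ω j) (μ j))
    {Y : Type} [NormedAddCommGroup Y] [NormedSpace ℝ Y]
    (T : (∀ j, (Ω j →ₘ[μ j] ℝ)) → Y) : Prop :=
  (∀ x, (∀ j, (X j).mem (x j)) → ∀ j f g, (X j).mem f → (X j).mem g →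
      T (Function.update x j (f + g)) = T (Function.update x j f) + T (Function.update x j g)) ∧
  (∀ x, (∀ j, (X j).mem (x j)) → ∀ j (c : ℝ) f, (X j).mem f →
      T (Function.update x j (c • f)) = c • T (Function.update x j f)) ∧
  ∃ K, ∀ x, (∀ j, (X j).mem (x j)) → ‖T x‖ ≤ K * ∏ j, (X j).nrm (x j)

/-- An `m`-linear operator is `(p₁,…,p_m)`-strongly `(q₁,…,q_m)`-concave with constant `C`,
where `1/q = ∑ⱼ 1/qⱼ`:
`(∑ₖ ‖T(x¹ₖ,…,xᵐₖ)‖^q)^{1/q} ≤ C ∏ⱼ sup_{βʲ ∈ B_{rⱼ}} ‖(∑ₖ |βʲₖ xʲₖ|^{pⱼ})^{1/pⱼ}‖_{Xⱼ}`. -/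
def StronglyConcaveML {m : ℕ} {Ω : Fin m → Type} [∀ j, MeasurableSpace (Ω j)]
    {μ : ∀ j, Measure (Ω j)} (X : ∀ j, BFL (Ω j) (μ j)) (p q : Fin m → ℝ)
    {Y : Type} [NormedAddCommGroup Y]
    (T : (∀ j, (Ω j →ₘ[μ j] ℝ)) → Y) (C : ℝ) : Prop :=
  ∀ (n : ℕ) (x : ∀ j, Fin n → (Ω j →ₘ[μ j] ℝ)), (∀ j k, (X j).mem (x j k)) →
    (∑ k, ‖T fun j => x j k‖ ^ (∑ j, (q j)⁻¹)⁻¹) ^ (∑ j, (q j)⁻¹) ≤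
      C * ∏ j, strongSup (X j).nrm (p j) (q j) (x j)

/-- A Banach space, packaged as a structure. -/
structure BanachSpaceStruct where
  E : Type
  grp : NormedAddCommGroup E
  mod : NormedSpace ℝ E
  cpl : CompleteSpace E

attribute [instance] BanachSpaceStruct.grp BanachSpaceStruct.mod BanachSpaceStruct.cpl

end Operators

/-!
The right-hand inequality is Hölder's inequality taken pointwise: since `1/p = 1/r + 1/q`,
`(∑ |βₖ xₖ|^p)^{1/p} ≤ ‖β‖_r (∑ |xₖ|^q)^{1/q}`, and the norm of `X` is monotone.

For the left-hand one, fix `x*`, put `aₖ = x*(xₖ)` and the weights `wₖ = |aₖ|^q / ‖a‖_q^q`.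
The coefficients `γₖ = sign(aₖ) wₖ^{1-1/q}` satisfy `∑ γₖ aₖ = ‖a‖_q`, and `βₖ = wₖ^{1/r}` lies in
`B_r^n`; the weighted Hölder inequality `∑ w z ≤ (∑ w z^p)^{1/p}` with `zₖ = wₖ^{-1/q} |xₖ|`
gives `|∑ γₖ xₖ| ≤ (∑ |βₖ xₖ|^p)^{1/p}` pointwise. Hence
`‖a‖_q = x*(∑ γₖ xₖ) ≤ ‖∑ γₖ xₖ‖_X ≤ ‖(∑ |βₖ xₖ|^p)^{1/p}‖_X`.
-/

open Finset

namespace Real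

variable {ι : Type*}

lemma sum_rpow_le_rpow_sum (s : Finset ι) {p : ℝ} (hp : 1 ≤ p) {a : ι → ℝ}
    (ha : ∀ i ∈ s, 0 ≤ a i) : ∑ i ∈ s, a i ^ p ≤ (∑ i ∈ s, a i) ^ p := by
  classical
  induction s using Finset.induction with
  | empty => simp [zero_rpow (by linarith : p ≠ 0)]
  | insert i s hi ih =>
    rw [sum_insert hi, sum_insert hi]
    have hs : ∀ j ∈ s, 0 ≤ a j := fun j hj => ha j (mem_insert_of_mem hj)
    calc a i ^ p + ∑ j ∈ s, a j ^ p ≤ a i ^ p + (∑ j ∈ s, a j) ^ p := by gcongr; exact ih hs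
      _ ≤ (a i + ∑ j ∈ s, a j) ^ p :=
        add_rpow_le_rpow_add (ha i (mem_insert_self i s)) (sum_nonneg hs) hp

lemma rpow_sum_rpow_inv_le_sum (s : Finset ι) {p : ℝ} (hp : 1 ≤ p) {a : ι → ℝ}
    (ha : ∀ i ∈ s, 0 ≤ a i) : (∑ i ∈ s, a i ^ p) ^ p⁻¹ ≤ ∑ i ∈ s, a i := by
  calc (∑ i ∈ s, a i ^ p) ^ p⁻¹ ≤ ((∑ i ∈ s, a i) ^ p) ^ p⁻¹ := by
        gcongr
        · exact sum_nonneg fun i hi => rpow_nonneg (ha i hi) p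
        · exact sum_rpow_le_rpow_sum s hp ha
    _ = ∑ i ∈ s, a i := rpow_rpow_inv (sum_nonneg ha) (by linarith)

lemma holderTriple_one_div_sub_one_div {p q : ℝ} (hp : 0 < p) (hpq : p < q) :
    HolderTriple (1 / p - 1 / q)⁻¹ q p where
  inv_add_inv_eq_inv := by rw [inv_inv]; ring
  left_pos := inv_pos.2 (sub_pos.2 (one_div_lt_one_div_of_lt hp hpq))
  right_pos := hp.trans hpq

lemma rpow_sum_mul_rpow_inv_le {s : Finset ι} {r q p : ℝ} (h : r.HolderTriple q p)
    {b c : ι → ℝ} (hb : ∀ i ∈ s, 0 ≤ b i) (hc : ∀ i ∈ s, 0 ≤ c i)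
    (hb1 : ∑ i ∈ s, b i ^ r ≤ 1) :
    (∑ i ∈ s, (b i * c i) ^ p) ^ p⁻¹ ≤ (∑ i ∈ s, c i ^ q) ^ q⁻¹ := by
  have hC : 0 ≤ ∑ i ∈ s, c i ^ q := sum_nonneg fun i hi => rpow_nonneg (hc i hi) q
  have hL : ∑ i ∈ s, (b i * c i) ^ p ≤ (∑ i ∈ s, c i ^ q) ^ (p / q) :=
    calc ∑ i ∈ s, (b i * c i) ^ p
        ≤ (∑ i ∈ s, b i ^ r) ^ (p / r) * (∑ i ∈ s, c i ^ q) ^ (p / q) :=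
          Lr_rpow_le_Lp_mul_Lq_of_nonneg s h hb hc
      _ ≤ (∑ i ∈ s, c i ^ q) ^ (p / q) := by
          refine mul_le_of_le_one_left (rpow_nonneg hC _) (rpow_le_one ?_ hb1 ?_)
          · exact sum_nonneg fun i hi => rpow_nonneg (hb i hi) r
          · exact div_nonneg h.nonneg' h.nonneg
  calc (∑ i ∈ s, (b i * c i) ^ p) ^ p⁻¹ ≤ ((∑ i ∈ s, c i ^ q) ^ (p / q)) ^ p⁻¹ := by
        gcongr
        · exact sum_nonneg fun i hi => rpow_nonneg (mul_nonneg (hb i hi) (hc i hi)) p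
        · exact h.inv_nonneg'
    _ = (∑ i ∈ s, c i ^ q) ^ q⁻¹ := by
        rw [← rpow_mul hC]
        congr 1
        field_simp [h.ne_zero', h.symm.ne_zero]

lemma sum_rpow_mul_le_of_sum_le_one (s : Finset ι) {p q : ℝ} (hp : 1 ≤ p) (hpq : p < q)
    {w c : ι → ℝ} (hw : ∀ i, 0 ≤ w i) (hc : ∀ i, 0 ≤ c i) (hw1 : ∑ i ∈ s, w i ≤ 1) :
    ∑ i ∈ s, w i ^ (1 - 1 / q) * c i ≤ (∑ i ∈ s, (w i ^ (1 / p - 1 / q) * c i) ^ p) ^ p⁻¹ := by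
  have hq : 0 < q := by linarith
  have hd : 1 / p - 1 / q ≠ 0 := sub_ne_zero.2 (one_div_lt_one_div_of_lt (by linarith) hpq).ne'
  have he : (1 / p - 1 / q) * p = 1 + -(1 / q) * p := by field_simp; ring
  have hne : 1 + -(1 / q) * p ≠ 0 := he ▸ mul_ne_zero hd (by linarith)
  have hne' : 1 + -(1 / q) ≠ 0 := by
    have : 1 / q < 1 := by rw [div_lt_one hq]; linarith
    linarith
  have key := inner_le_weight_mul_Lp_of_nonneg s hp w (fun i => w i ^ (-(1 / q)) * c i) hw
    fun i => mul_nonneg (rpow_nonneg (hw i) _) (hc i)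
  have hlin : ∀ i, w i * (w i ^ (-(1 / q)) * c i) = w i ^ (1 - 1 / q) * c i := fun i => by
    rw [← mul_assoc, sub_eq_add_neg, rpow_add' (hw i) hne', rpow_one]
  have hpow : ∀ i, w i * (w i ^ (-(1 / q)) * c i) ^ p = (w i ^ (1 / p - 1 / q) * c i) ^ p :=
    fun i => by
      rw [mul_rpow (rpow_nonneg (hw i) _) (hc i), mul_rpow (rpow_nonneg (hw i) _) (hc i),
        ← rpow_mul (hw i), ← rpow_mul (hw i), ← mul_assoc, he, rpow_add' (hw i) hne, rpow_one]
  simp only [hlin, hpow] at key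
  refine key.trans (mul_le_of_le_one_left (rpow_nonneg ?_ _) (rpow_le_one ?_ hw1 ?_))
  · exact sum_nonneg fun i _ => rpow_nonneg (mul_nonneg (rpow_nonneg (hw i) _) (hc i)) p
  · exact sum_nonneg fun i _ => hw i
  · exact sub_nonneg.2 (inv_le_one_of_one_le₀ hp)

lemma exists_strong_norming [Fintype ι] {p q : ℝ} (hp : 1 ≤ p) (hpq : p < q) (a : ι → ℝ) :
    ∃ γ β : ι → ℝ, ∑ i, |β i| ^ (1 / p - 1 / q)⁻¹ ≤ 1 ∧
      ∑ i, γ i * a i = (∑ i, |a i| ^ q) ^ q⁻¹ ∧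
      ∀ c : ι → ℝ, |∑ i, γ i * c i| ≤ (∑ i, |β i * c i| ^ p) ^ p⁻¹ := by
  have hq : 0 < q := by linarith
  have hr := holderTriple_one_div_sub_one_div (by linarith : 0 < p) hpq
  set A := (∑ i, |a i| ^ q) ^ q⁻¹ with hA
  have hS : 0 ≤ ∑ i, |a i| ^ q := sum_nonneg fun i _ => rpow_nonneg (abs_nonneg _) q
  rcases (rpow_nonneg hS q⁻¹).eq_or_lt with hA0 | hA0
  · refine ⟨0, 0, ?_, by simpa using hA0, fun c => ?_⟩
    · simp only [Pi.zero_apply, abs_zero, zero_rpow hr.ne_zero, sum_const_zero]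
      exact zero_le_one
    · simp only [Pi.zero_apply, zero_mul, sum_const_zero, abs_zero]
      positivity
  set w : ι → ℝ := fun i => (|a i| / A) ^ q
  have hw : ∀ i, 0 ≤ w i := fun i => rpow_nonneg (div_nonneg (abs_nonneg _) hA0.le) q
  have hw1 : ∑ i, w i = 1 := by
    simp only [w, div_rpow (abs_nonneg _) hA0.le, ← sum_div, hA, rpow_inv_rpow hS hq.ne']
    refine div_self fun h => hA0.ne' ?_
    rw [h, zero_rpow (inv_ne_zero hq.ne')]
  have ha : ∀ i, |a i| = A * w i ^ (1 / q) := fun i => by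
    rw [one_div, rpow_rpow_inv (div_nonneg (abs_nonneg _) hA0.le) hq.ne',
      mul_div_cancel₀ _ hA0.ne']
  refine ⟨fun i => SignType.sign (a i) * w i ^ (1 - 1 / q), fun i => w i ^ (1 / p - 1 / q),
    ?_, ?_, fun c => ?_⟩
  · have hd : 1 / p - 1 / q ≠ 0 :=
      sub_ne_zero.2 (one_div_lt_one_div_of_lt (by linarith) hpq).ne'
    simp only [abs_of_nonneg (rpow_nonneg (hw _) _), rpow_rpow_inv (hw _) hd]
    exact hw1.le
  · calc ∑ i, SignType.sign (a i) * w i ^ (1 - 1 / q) * a i = ∑ i, A * w i := by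
          refine sum_congr rfl fun i _ => ?_
          rw [mul_right_comm, sign_mul_self, ha i, mul_assoc, ← rpow_add' (hw i) (by simp),
            add_sub_cancel, rpow_one]
      _ = A := by rw [← mul_sum, hw1, mul_one]
  · have hsign : ∀ i, |(SignType.sign (a i) : ℝ)| ≤ 1 := fun i => by
      rcases lt_trichotomy (a i) 0 with h | h | h <;> simp [h]
    calc |∑ i, SignType.sign (a i) * w i ^ (1 - 1 / q) * c i|
        ≤ ∑ i, |SignType.sign (a i) * w i ^ (1 - 1 / q) * c i| := abs_sum_le_sum_abs _ _
      _ ≤ ∑ i, w i ^ (1 - 1 / q) * |c i| := by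
          refine sum_le_sum fun i _ => ?_
          rw [abs_mul, abs_mul, abs_of_nonneg (rpow_nonneg (hw i) _)]
          gcongr
          exact mul_le_of_le_one_left (rpow_nonneg (hw i) _) (hsign i)
      _ ≤ (∑ i, (w i ^ (1 / p - 1 / q) * |c i|) ^ p) ^ p⁻¹ :=
          sum_rpow_mul_le_of_sum_le_one _ hp hpq hw (fun i => abs_nonneg _) hw1.le
      _ = (∑ i, |w i ^ (1 / p - 1 / q) * c i| ^ p) ^ p⁻¹ := by
          simp only [abs_mul, abs_of_nonneg (rpow_nonneg (hw _) _)]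

end Real

namespace MeasureTheory.AEEqFun

variable {Ω : Type} [MeasurableSpace Ω] {μ : Measure Ω}

lemma abs_le_abs_of_ae {f g : Ω →ₘ[μ] ℝ} (h : ∀ᵐ ω ∂μ, |f ω| ≤ |g ω|) : |f| ≤ |g| := by
  rw [← coeFn_le]
  filter_upwards [coeFn_abs f, coeFn_abs g, h] with ω hf hg h
  rwa [hf, hg]

lemma coeFn_sum_smul {ι : Type*} (s : Finset ι) (c : ι → ℝ) (f : ι → Ω →ₘ[μ] ℝ) :
    ⇑(∑ i ∈ s, c i • f i) =ᵐ[μ] fun ω => ∑ i ∈ s, c i * f i ω := by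
  have hs : ∀ᵐ ω ∂μ, ∀ i ∈ s, (c i • f i) ω = c i * f i ω :=
    (Filter.eventually_all_finset s).2 fun i _ => coeFn_smul (c i) (f i)
  filter_upwards [coeFn_fun_finsetSum s fun i => c i • f i, hs] with ω h hs
  rw [h]
  exact sum_congr rfl hs

end MeasureTheory.AEEqFun

section FunctionLattice

open AEEqFun

variable {Ω : Type} [MeasurableSpace Ω] {μ : Measure Ω}

lemma coeFn_pSum (p : ℝ) {n : ℕ} (x : Fin n → Ω →ₘ[μ] ℝ) :
    ⇑(pSum p x) =ᵐ[μ] fun ω => (∑ k, |x k ω| ^ p) ^ p⁻¹ :=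
  coeFn_mk _ _

lemma coeFn_pSum_smul (p : ℝ) {n : ℕ} (β : Fin n → ℝ) (x : Fin n → Ω →ₘ[μ] ℝ) :
    ⇑(pSum p fun k => β k • x k) =ᵐ[μ] fun ω => (∑ k, |β k * x k ω| ^ p) ^ p⁻¹ := by
  have hs : ∀ᵐ ω ∂μ, ∀ k, (β k • x k) ω = β k * x k ω :=
    ae_all_iff.2 fun k => coeFn_smul (β k) (x k)
  filter_upwards [coeFn_pSum p fun k => β k • x k, hs] with ω h hs
  simp only [h, hs]

lemma mem_strongBall_iff {p q : ℝ} (hpq : p ≠ q) {n : ℕ} {β : Fin n → ℝ} :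
    β ∈ strongBall p q n ↔ ∑ k, |β k| ^ (1 / p - 1 / q)⁻¹ ≤ 1 :=
  iff_of_eq (if_neg hpq)

namespace BFL

variable (X : BFL Ω μ)

lemma mem_of_ae_abs_le {f g : Ω →ₘ[μ] ℝ} (hg : X.mem g) (h : ∀ᵐ ω ∂μ, |f ω| ≤ |g ω|) :
    X.mem f :=
  X.ideal f g hg (abs_le_abs_of_ae h)

lemma nrm_le_of_ae_abs_le {f g : Ω →ₘ[μ] ℝ} (hg : X.mem g) (h : ∀ᵐ ω ∂μ, |f ω| ≤ |g ω|) :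
    X.nrm f ≤ X.nrm g :=
  X.nrm_mono f g hg (abs_le_abs_of_ae h)

lemma mem_sum {ι : Type*} (s : Finset ι) {f : ι → Ω →ₘ[μ] ℝ} (hf : ∀ i, X.mem (f i)) :
    X.mem (∑ i ∈ s, f i) := by
  classical
  induction s using Finset.induction with
  | empty => simpa using X.zero_mem
  | insert i s hi ih => rw [sum_insert hi]; exact X.add_mem _ _ (hf i) ih

lemma mem_pSum {p : ℝ} (hp : 1 ≤ p) {n : ℕ} {x : Fin n → Ω →ₘ[μ] ℝ} (hx : ∀ k, X.mem (x k)) :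
    X.mem (pSum p x) := by
  have habs : ∀ᵐ ω ∂μ, ∀ k, |x k| ω = |x k ω| := ae_all_iff.2 fun k => coeFn_abs (x k)
  have hmem : ∀ k, X.mem |x k| := fun k =>
    X.mem_of_ae_abs_le (hx k) <| (coeFn_abs (x k)).mono fun ω h => by rw [h, abs_abs]
  refine X.mem_of_ae_abs_le (X.mem_sum univ hmem) ?_
  filter_upwards [coeFn_pSum p x, coeFn_fun_finsetSum univ fun k => |x k|, habs]
    with ω hpSum hsum habs
  simp only [hpSum, hsum, habs]
  rw [abs_of_nonneg (by positivity), abs_of_nonneg (by positivity)]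
  exact Real.rpow_sum_rpow_inv_le_sum univ hp fun k _ => abs_nonneg _

lemma map_sum_smul_of_mem_dualBall {φ : (Ω →ₘ[μ] ℝ) → ℝ} (hφ : φ ∈ dualBall X.mem X.nrm)
    {ι : Type*} (s : Finset ι) (c : ι → ℝ) {f : ι → Ω →ₘ[μ] ℝ} (hf : ∀ i, X.mem (f i)) :
    φ (∑ i ∈ s, c i • f i) = ∑ i ∈ s, c i * φ (f i) := by
  obtain ⟨hadd, hsmul, -⟩ := hφ
  classical
  induction s using Finset.induction with
  | empty => simpa using hsmul 0 0 X.zero_mem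
  | insert i s hi ih =>
    rw [sum_insert hi, sum_insert hi, hadd _ _ (X.smul_mem _ _ (hf i))
      (X.mem_sum s fun j => X.smul_mem _ _ (hf j)), hsmul _ _ (hf i), ih]

variable {p q : ℝ} {n : ℕ} {x : Fin n → Ω →ₘ[μ] ℝ}

lemma nrm_pSum_smul_le (hp : 1 ≤ p) (hpq : p < q) (hx : ∀ k, X.mem (x k)) {β : Fin n → ℝ}
    (hβ : β ∈ strongBall p q n) : X.nrm (pSum p fun k => β k • x k) ≤ X.nrm (pSum q x) := by
  refine X.nrm_le_of_ae_abs_le (X.mem_pSum (hp.trans hpq.le) hx) ?_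
  filter_upwards [coeFn_pSum_smul p β x, coeFn_pSum q x] with ω hβx hx
  rw [hβx, hx, abs_of_nonneg (by positivity), abs_of_nonneg (by positivity)]
  simp only [abs_mul]
  exact Real.rpow_sum_mul_rpow_inv_le (Real.holderTriple_one_div_sub_one_div (by linarith) hpq)
    (fun k _ => abs_nonneg _) (fun k _ => abs_nonneg _) ((mem_strongBall_iff hpq.ne).1 hβ)

lemma strongSup_le_nrm_pSum (hp : 1 ≤ p) (hpq : p < q) (hx : ∀ k, X.mem (x k)) :
    strongSup X.nrm p q x ≤ X.nrm (pSum q x) :=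
  Real.iSup_le (fun β => X.nrm_pSum_smul_le hp hpq hx β.2) (X.nrm_nonneg _)

lemma nrm_pSum_smul_le_strongSup (hp : 1 ≤ p) (hpq : p < q) (hx : ∀ k, X.mem (x k))
    {β : Fin n → ℝ} (hβ : β ∈ strongBall p q n) :
    X.nrm (pSum p fun k => β k • x k) ≤ strongSup X.nrm p q x :=
  le_ciSup (f := fun β : strongBall p q n => X.nrm (pSum p fun k => β.1 k • x k))
    ⟨X.nrm (pSum q x), Set.forall_mem_range.2 fun β => X.nrm_pSum_smul_le hp hpq hx β.2⟩
    ⟨β, hβ⟩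

lemma rpow_sum_abs_rpow_inv_le_strongSup (hp : 1 ≤ p) (hpq : p < q) (hx : ∀ k, X.mem (x k))
    {φ : (Ω →ₘ[μ] ℝ) → ℝ} (hφ : φ ∈ dualBall X.mem X.nrm) :
    (∑ k, |φ (x k)| ^ q) ^ q⁻¹ ≤ strongSup X.nrm p q x := by
  obtain ⟨γ, β, hβ, hγ, hγβ⟩ := Real.exists_strong_norming hp hpq fun k => φ (x k)
  have hβx : ∀ k, X.mem (β k • x k) := fun k => X.smul_mem _ _ (hx k)
  calc (∑ k, |φ (x k)| ^ q) ^ q⁻¹ = φ (∑ k, γ k • x k) := by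
        rw [X.map_sum_smul_of_mem_dualBall hφ univ γ hx, hγ]
    _ ≤ X.nrm (∑ k, γ k • x k) :=
        (le_abs_self _).trans (hφ.2.2 _ (X.mem_sum univ fun k => X.smul_mem _ _ (hx k)))
    _ ≤ X.nrm (pSum p fun k => β k • x k) := by
        refine X.nrm_le_of_ae_abs_le (X.mem_pSum hp hβx) ?_
        filter_upwards [coeFn_sum_smul univ γ x, coeFn_pSum_smul p β x] with ω hγx hβx
        rw [hγx, hβx]
        exact (hγβ fun k => x k ω).trans (le_abs_self _)
    _ ≤ strongSup X.nrm p q x :=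
        X.nrm_pSum_smul_le_strongSup hp hpq hx ((mem_strongBall_iff hpq.ne).2 hβ)

end BFL

end FunctionLattice

theorem statement12_general {Ω : Type} [MeasurableSpace Ω] (μ : Measure Ω)
    (X : BFL Ω μ) (p q : ℝ) (hp : 1 ≤ p) (hpq : p < q)
    {n : ℕ} (x : Fin n → (Ω →ₘ[μ] ℝ)) (hx : ∀ k, X.mem (x k)) :
    (⨆ φ : ↥(dualBall X.mem X.nrm), (∑ k, |φ.1 (x k)| ^ q) ^ q⁻¹) ≤
        strongSup X.nrm p q x ∧
      strongSup X.nrm p q x ≤ X.nrm (pSum q x) :=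
  ⟨Real.iSup_le (fun φ => X.rpow_sum_abs_rpow_inv_le_strongSup hp hpq hx φ.2)
      (Real.iSup_nonneg fun _ => X.nrm_nonneg _),
    X.strongSup_le_nrm_pSum hp hpq hx⟩

/-- for `1 ≤ p < q` and `1/r = 1/p - 1/q`, in any Banach function
lattice `X`:
`sup_{x* ∈ B_{X*}} (∑ |⟨xₖ, x*⟩|^q)^{1/q} ≤ sup_{β ∈ B_r^n} ‖(∑ |βₖ xₖ|^p)^{1/p}‖_X
  ≤ ‖(∑ |xₖ|^q)^{1/q}‖_X`. -/
theorem statement12 {Ω : Type} [MeasurableSpace Ω] (μ : Measure Ω) [SigmaFinite μ]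
    (X : BFL Ω μ) (p q : ℝ) (hp : 1 ≤ p) (hpq : p < q)
    {n : ℕ} (x : Fin n → (Ω →ₘ[μ] ℝ)) (hx : ∀ k, X.mem (x k)) :
    (⨆ φ : ↥(dualBall X.mem X.nrm), (∑ k, |φ.1 (x k)| ^ q) ^ q⁻¹) ≤
        strongSup X.nrm p q x ∧
      strongSup X.nrm p q x ≤ X.nrm (pSum q x) :=
  statement12_general μ X p q hp hpq x hx

end
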